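/- A nonzero ordinal ξ has the following property if and only if ξ is additively indecomposable (i.e., there do not exist α, β < ξ with α + β ≥ ξ; equivalently ξ = ω^η for some ordinal η): for every tree P with rank(P) = ξ, every k < ω, and every function f : P → {0,…,k}, there exists a subtree Q of P with rank(Q) = rank(P) such that f is constant on Q. -/

import Mathlib

open Ordinal Set

universe u

/-- The set of maximal elements ("leaves") of `P`. -/
def treeLeaves {α : Type u} [PartialOrder α] (P : Set α) : Set α :=
  {t ∈ P | ∀ s ∈ P, ¬ t < s}

/-- The derivative `P' = P \ Leaves P`. -/
def treeDeriv {α : Type u} [PartialOrder α] (P : Set α) : Set α :=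
  P \ treeLeaves P

/-- The transfinite iterated derivative `P^ξ`. -/
noncomputable def derivIter {α : Type u} [PartialOrder α] (P : Set α) (ξ : Ordinal.{u}) :
    Set α :=
  Ordinal.limitRecOn ξ P (fun _ ih => treeDeriv ih)
    (fun o _ ih => ⋂ (ζ : Set.Iio o), ih ζ.1 ζ.2)

/-- `P` is a tree: every ancestor set is well-ordered (a well-founded chain). -/
def IsTree {α : Type u} [PartialOrder α] (P : Set α) : Prop :=
  ∀ t ∈ P, IsChain (· ≤ ·) {s ∈ P | s ≤ t} ∧ {s ∈ P | s ≤ t}.WellFoundedOn (· < ·)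

/-- `P` is well-founded: some transfinite derivative is empty. -/
def IsWFTree {α : Type u} [PartialOrder α] (P : Set α) : Prop :=
  ∃ ξ : Ordinal.{u}, derivIter P ξ = ∅

/-- The rank of a well-founded tree: the least `ξ` with `P^ξ = ∅`. -/
noncomputable def treeRank {α : Type u} [PartialOrder α] (P : Set α) : Ordinal.{u} :=
  sInf {ξ | derivIter P ξ = ∅}

/-- `τ_P(t)`: the largest ordinal `ξ` with `t ∈ P^ξ`. -/
noncomputable def treeTau {α : Type u} [PartialOrder α] (P : Set α) (t : α) : Ordinal.{u} :=
  sSup {ξ | t ∈ derivIter P ξ}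

/-- `τ_{P,β}(t)`: the largest ordinal `ξ` with `t ∈ P^{β·ξ}`. -/
noncomputable def treeTauMul {α : Type u} [PartialOrder α] (P : Set α) (β : Ordinal.{u})
    (t : α) : Ordinal.{u} :=
  sSup {ξ | t ∈ derivIter P (β * ξ)}

/-- `alpProd ε i = ω^{ω^{ε 0}} · ⋯ · ω^{ω^{ε i}}`. -/
noncomputable def alpProd (ε : ℕ → Ordinal.{u}) : ℕ → Ordinal.{u}
  | 0 => omega0 ^ omega0 ^ ε 0
  | (i + 1) => alpProd ε i * omega0 ^ omega0 ^ ε (i + 1)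

/-- The separation function `ς_P` of a tree whose rank has decomposition
`ω^{ω^{ε 0}} ⋯ ω^{ω^{ε l}}`: the least `i` such that `s, t` lie in the same block
`P^{α_i·δ} \ P^{α_i·(δ+1)}` for some ordinal `δ`. -/
noncomputable def sep {α : Type u} [PartialOrder α] (P : Set α) (ε : ℕ → Ordinal.{u})
    (s t : α) : ℕ :=
  sInf {i : ℕ | ∃ δ : Ordinal.{u},
    s ∈ derivIter P (alpProd ε i * δ) \ derivIter P (alpProd ε i * (δ + 1)) ∧
    t ∈ derivIter P (alpProd ε i * δ) \ derivIter P (alpProd ε i * (δ + 1))}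

/-- `indProd ε A l = ω^{ω^{ε 0}·1_A(0)} ⋯ ω^{ω^{ε l}·1_A(l)}`. -/
noncomputable def indProd (ε : ℕ → Ordinal.{u}) (A : Set ℕ) : ℕ → Ordinal.{u}
  | 0 => omega0 ^ (omega0 ^ ε 0 * A.indicator (fun _ => (1 : Ordinal.{u})) 0)
  | (i + 1) => indProd ε A i *
      omega0 ^ (omega0 ^ ε (i + 1) * A.indicator (fun _ => (1 : Ordinal.{u})) (i + 1))

/-- `sumPow ε i = ω^{ε 0} + ⋯ + ω^{ε (i-1)}` (the partial sums `γ_i`). -/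
noncomputable def sumPow (ε : ℕ → Ordinal.{u}) : ℕ → Ordinal.{u}
  | 0 => 0
  | (i + 1) => sumPow ε i + omega0 ^ ε i

/-- `indSum ε A i = Σ_{n < i} 1_A(n)·ω^{ε n}`. -/
noncomputable def indSum (ε : ℕ → Ordinal.{u}) (A : Set ℕ) : ℕ → Ordinal.{u}
  | 0 => 0
  | (i + 1) => indSum ε A i + A.indicator (fun _ => (1 : Ordinal.{u})) i * omega0 ^ ε i

/-!
If `ξ = ω ^ δ`, then `ξ` is also closed under the natural sum `♯`, and
`rank (Q ∪ R) ≤ rank Q ♯ rank R`: labelling each `t` by the natural sum of the ranks of `Q` and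
of `R` strictly above `t` gives a label that strictly decreases up the tree and stays below
`rank Q ♯ rank R`. Hence finitely many colour classes of rank `< ξ` cannot cover a tree of
rank `ξ`, so some class has full rank.

Conversely, if `a, b < ξ ≤ a + b`, take the tree of finite strictly decreasing sequences in `ξ`,
labelled by their last entry, which has rank `ξ`, and colour a sequence by whether its label is
below `a`. A strictly decreasing label with values in `[a, a + b)` bounds the rank by `b`, so every
monochromatic subtree has rank at most `a` or at most `b`.
-/

namespace Ordinal

/-- The natural (Hessenberg) sum of ordinals. -/
noncomputable def nadd (a b : Ordinal.{u}) : Ordinal.{u} :=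
  sInf {c | (∀ a' < a, nadd a' b < c) ∧ ∀ b' < b, nadd a b' < c}
termination_by (a, b)

infixl:65 " ♯ " => Ordinal.nadd

theorem nadd_lt_nadd_right_and_left (a b : Ordinal.{u}) :
    (∀ a' < a, a' ♯ b < a ♯ b) ∧ ∀ b' < b, a ♯ b' < a ♯ b := by
  have hne : {c | (∀ a' < a, a' ♯ b < c) ∧ ∀ b' < b, a ♯ b' < c}.Nonempty := by
    obtain ⟨B, hB⟩ := bddAbove_of_small (s := (· ♯ b) '' Iio a ∪ (a ♯ ·) '' Iio b)
    exact ⟨Order.succ B, fun a' ha' => Order.lt_succ_of_le (hB (.inl ⟨a', ha', rfl⟩)),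
      fun b' hb' => Order.lt_succ_of_le (hB (.inr ⟨b', hb', rfl⟩))⟩
  rw [nadd]
  exact csInf_mem hne

theorem nadd_lt_nadd_right {a a' : Ordinal.{u}} (h : a' < a) (b : Ordinal.{u}) :
    a' ♯ b < a ♯ b :=
  (nadd_lt_nadd_right_and_left a b).1 a' h

theorem nadd_lt_nadd_left {b b' : Ordinal.{u}} (h : b' < b) (a : Ordinal.{u}) :
    a ♯ b' < a ♯ b :=
  (nadd_lt_nadd_right_and_left a b).2 b' h

theorem nadd_le_iff {a b c : Ordinal.{u}} :
    a ♯ b ≤ c ↔ (∀ a' < a, a' ♯ b < c) ∧ ∀ b' < b, a ♯ b' < c := by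
  refine ⟨fun h => ⟨fun a' ha' => (nadd_lt_nadd_right ha' b).trans_le h,
    fun b' hb' => (nadd_lt_nadd_left hb' a).trans_le h⟩, fun h => ?_⟩
  rw [nadd]
  exact csInf_le' h

theorem nadd_le_nadd_right {a a' : Ordinal.{u}} (h : a' ≤ a) (b : Ordinal.{u}) :
    a' ♯ b ≤ a ♯ b :=
  StrictMono.monotone (fun _ _ h => nadd_lt_nadd_right h b) h

theorem nadd_le_nadd_left {b b' : Ordinal.{u}} (h : b' ≤ b) (a : Ordinal.{u}) :
    a ♯ b' ≤ a ♯ b :=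
  StrictMono.monotone (fun _ _ h => nadd_lt_nadd_left h a) h

theorem nadd_lt_nadd_of_lt_of_le {a a' b b' : Ordinal.{u}} (ha : a' < a) (hb : b' ≤ b) :
    a' ♯ b' < a ♯ b :=
  (nadd_lt_nadd_right ha b').trans_le (nadd_le_nadd_left hb a)

theorem nadd_lt_nadd_of_le_of_lt {a a' b b' : Ordinal.{u}} (ha : a' ≤ a) (hb : b' < b) :
    a' ♯ b' < a ♯ b :=
  (nadd_le_nadd_right ha b').trans_lt (nadd_lt_nadd_left hb a)

theorem nadd_comm (a b : Ordinal.{u}) : a ♯ b = b ♯ a := by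
  induction a using WellFoundedLT.induction generalizing b with
  | _ a iha =>
  induction b using WellFoundedLT.induction with
  | _ b ihb =>
  refine le_antisymm (nadd_le_iff.2 ⟨fun a' ha' => ?_, fun b' hb' => ?_⟩)
    (nadd_le_iff.2 ⟨fun b' hb' => ?_, fun a' ha' => ?_⟩)
  · rw [iha a' ha']; exact nadd_lt_nadd_left ha' b
  · rw [ihb b' hb']; exact nadd_lt_nadd_right hb' a
  · rw [← ihb b' hb']; exact nadd_lt_nadd_left hb' a
  · rw [← iha a' ha']; exact nadd_lt_nadd_right ha' b

theorem nadd_zero (a : Ordinal.{u}) : a ♯ 0 = a := by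
  induction a using WellFoundedLT.induction with
  | _ a ih =>
  refine le_antisymm (nadd_le_iff.2 ⟨fun a' ha' => ?_, fun b' hb' => absurd hb' not_lt_zero⟩)
    (StrictMono.id_le (fun _ _ h => nadd_lt_nadd_right h 0) a)
  rwa [ih a' ha']

theorem nadd_add_one (a b : Ordinal.{u}) : a ♯ (b + 1) = a ♯ b + 1 := by
  induction a using WellFoundedLT.induction with
  | _ a ih =>
  refine le_antisymm (nadd_le_iff.2 ⟨fun a' ha' => ?_, fun b' hb' => ?_⟩)
    (Order.add_one_le_of_lt (nadd_lt_nadd_left (Order.lt_add_one_iff.2 le_rfl) a))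
  · rw [ih a' ha']
    exact Order.lt_add_one_iff.2 (Order.add_one_le_of_lt (nadd_lt_nadd_right ha' b))
  · exact Order.lt_add_one_iff.2 (nadd_le_nadd_left (Order.lt_add_one_iff.1 hb') a)

theorem nadd_natCast (a : Ordinal.{u}) (n : ℕ) : a ♯ n = a + n := by
  induction n with
  | zero => simp [nadd_zero]
  | succ n ih => rw [Nat.cast_succ, nadd_add_one, ih, add_assoc]

theorem nadd_lt_omega0 {a b : Ordinal.{u}} (ha : a < ω) (hb : b < ω) : a ♯ b < ω := by
  obtain ⟨n, rfl⟩ := lt_omega0.1 hb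
  rw [nadd_natCast]
  exact isPrincipal_add_omega0 ha hb

theorem mul_nadd_add_nadd_lt {γ : Ordinal.{u}} (hγ : IsPrincipal (· ♯ ·) γ) (hγ₀ : γ ≠ 0)
    {x' x : Ordinal.{u}} (hx : x' < x) (n : Ordinal.{u}) {s : Ordinal.{u}} (hs : s < γ) :
    γ * (x' / γ ♯ n) + (x' % γ ♯ s) < γ * (x / γ ♯ n) + (x % γ ♯ s) := by
  rcases (div_le_left hx.le γ).lt_or_eq with hq | hq
  · calc γ * (x' / γ ♯ n) + (x' % γ ♯ s)
        < γ * (x' / γ ♯ n) + γ := add_lt_add_right (hγ (mod_lt x' hγ₀) hs) _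
      _ = γ * (x' / γ ♯ n + 1) := (mul_add_one _ _).symm
      _ ≤ γ * (x / γ ♯ n) := mul_le_mul_right (Order.add_one_le_of_lt (nadd_lt_nadd_right hq n)) γ
      _ ≤ γ * (x / γ ♯ n) + (x % γ ♯ s) := le_self_add
  · have hr : x' % γ < x % γ := by
      have := div_add_mod x' γ ▸ div_add_mod x γ ▸ hx
      rwa [hq, add_lt_add_iff_left] at this
    rw [hq]
    exact add_lt_add_right (nadd_lt_nadd_right hr s) _

theorem nadd_le_mul_nadd_add_nadd {γ : Ordinal.{u}} (hγ : IsPrincipal (· ♯ ·) γ) (hγ₀ : γ ≠ 0)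
    (x y : Ordinal.{u}) :
    x ♯ y ≤ γ * (x / γ ♯ y / γ) + (x % γ ♯ y % γ) := by
  induction x using WellFoundedLT.induction generalizing y with
  | _ x ihx =>
  induction y using WellFoundedLT.induction with
  | _ y ihy =>
  refine nadd_le_iff.2 ⟨fun x' hx' => ?_, fun y' hy' => ?_⟩
  · exact (ihx x' hx' y).trans_lt (mul_nadd_add_nadd_lt hγ hγ₀ hx' _ (mod_lt y hγ₀))
  · refine (ihy y' hy').trans_lt ?_
    simpa only [nadd_comm (x / γ), nadd_comm (x % γ)] using
      mul_nadd_add_nadd_lt hγ hγ₀ hy' (x / γ) (mod_lt x hγ₀)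

theorem isPrincipal_nadd_omega0_opow (δ : Ordinal.{u}) : IsPrincipal (· ♯ ·) (ω ^ δ) := by
  induction δ using limitRecOn with
  | zero =>
    intro a b ha hb
    rw [opow_zero, Order.lt_one_iff] at ha hb
    rw [opow_zero, ha, hb]
    exact (nadd_zero 0).trans_lt zero_lt_one
  | add_one e ih =>
    have hγ₀ : ω ^ e ≠ 0 := opow_ne_zero e omega0_ne_zero
    intro x y hx hy
    rw [opow_add, opow_one] at hx hy ⊢
    have hq : x / ω ^ e ♯ y / ω ^ e < ω :=
      nadd_lt_omega0 ((lt_mul_iff_div_lt hγ₀).1 hx) ((lt_mul_iff_div_lt hγ₀).1 hy)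
    calc x ♯ y ≤ ω ^ e * (x / ω ^ e ♯ y / ω ^ e) + (x % ω ^ e ♯ y % ω ^ e) :=
          nadd_le_mul_nadd_add_nadd ih hγ₀ x y
      _ < ω ^ e * (x / ω ^ e ♯ y / ω ^ e) + ω ^ e :=
          add_lt_add_right (ih (mod_lt x hγ₀) (mod_lt y hγ₀)) _
      _ = ω ^ e * (x / ω ^ e ♯ y / ω ^ e + 1) := (mul_add_one _ _).symm
      _ ≤ ω ^ e * ω := mul_le_mul_right (Order.add_one_le_of_lt hq) _
  | limit δ hδ ih =>
    intro a b ha hb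
    obtain ⟨e, he, hae⟩ := (lt_opow_of_isSuccLimit omega0_ne_zero hδ).1 ha
    obtain ⟨e', he', hbe'⟩ := (lt_opow_of_isSuccLimit omega0_ne_zero hδ).1 hb
    have hmono : ∀ {x y : Ordinal.{u}}, x ≤ y → ω ^ x ≤ ω ^ y := opow_le_opow_right omega0_pos
    exact (ih _ (max_lt he he') (hae.trans_le (hmono (le_max_left _ _)))
      (hbe'.trans_le (hmono (le_max_right _ _)))).trans_le (hmono (max_lt he he').le)

theorem IsPrincipal.nadd_lt {ξ a b : Ordinal.{u}} (hξ : IsPrincipal (· + ·) ξ) (ha : a < ξ)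
    (hb : b < ξ) : a ♯ b < ξ := by
  obtain rfl | ⟨δ, rfl⟩ := isPrincipal_add_iff_zero_or_omega0_opow.1 hξ
  · exact absurd ha not_lt_zero
  · exact isPrincipal_nadd_omega0_opow δ ha hb

end Ordinal

section

variable {α : Type u} [PartialOrder α] {P Q R : Set α} {s t : α} {ζ ρ : Ordinal.{u}}

theorem mem_treeDeriv : t ∈ treeDeriv P ↔ t ∈ P ∧ ∃ s ∈ P, t < s := by
  simp [treeDeriv, treeLeaves]

theorem derivIter_zero : derivIter P 0 = P :=
  limitRecOn_zero ..

theorem derivIter_add_one (ζ : Ordinal.{u}) :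
    derivIter P (ζ + 1) = treeDeriv (derivIter P ζ) :=
  limitRecOn_add_one ..

theorem derivIter_limit (h : Order.IsSuccLimit ζ) :
    derivIter P ζ = ⋂ ζ' : Iio ζ, derivIter P ζ' :=
  limitRecOn_limit _ _ _ _ h

theorem derivIter_antitone : Antitone (derivIter P) := by
  intro ζ' ζ h
  induction ζ using limitRecOn with
  | zero => rw [nonpos_iff_eq_zero.1 h]
  | add_one ζ ih =>
    rcases h.eq_or_lt with rfl | h
    · exact le_rfl
    · rw [derivIter_add_one]
      exact sdiff_subset.trans (ih (Order.lt_add_one_iff.1 h))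
  | limit ζ hζ _ =>
    rcases h.eq_or_lt with rfl | h
    · exact le_rfl
    · rw [derivIter_limit hζ]
      exact iInter_subset (fun ζ'' : Iio ζ => derivIter P ζ'') ⟨ζ', h⟩

theorem derivIter_subset (ζ : Ordinal.{u}) : derivIter P ζ ⊆ P := by
  simpa only [derivIter_zero] using derivIter_antitone (P := P) (zero_le (a := ζ))

theorem mem_derivIter_iff :
    t ∈ derivIter P ζ ↔ t ∈ P ∧ ∀ ζ' < ζ, ∃ s ∈ derivIter P ζ', t < s := by
  induction ζ using limitRecOn generalizing t with
  | zero => simp [derivIter_zero]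
  | add_one ζ ih =>
    rw [derivIter_add_one, mem_treeDeriv]
    refine ⟨fun ⟨ht, s, hs, hts⟩ => ⟨derivIter_subset ζ ht, fun ζ' hζ' =>
        ⟨s, derivIter_antitone (Order.lt_add_one_iff.1 hζ') hs, hts⟩⟩, fun ⟨ht, h⟩ => ?_⟩
    obtain ⟨s, hs, hts⟩ := h ζ (Order.lt_add_one_iff.2 le_rfl)
    exact ⟨ih.2 ⟨ht, fun ζ' hζ' => ⟨s, derivIter_antitone hζ'.le hs, hts⟩⟩, s, hs, hts⟩
  | limit ζ hζ ih =>
    rw [derivIter_limit hζ, mem_iInter]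
    refine ⟨fun h => ⟨derivIter_subset 0 (h ⟨0, hζ.bot_lt⟩), fun ζ' hζ' => ?_⟩,
      fun ⟨ht, h⟩ ζ' => (ih ζ' ζ'.2).2 ⟨ht, fun ζ'' hζ'' => h ζ'' (hζ''.trans ζ'.2)⟩⟩
    obtain ⟨-, h'⟩ := (ih _ (hζ.add_one_lt hζ')).1 (h ⟨_, hζ.add_one_lt hζ'⟩)
    exact h' ζ' (Order.lt_add_one_iff.2 le_rfl)

theorem derivIter_mono (h : Q ⊆ P) (ζ : Ordinal.{u}) : derivIter Q ζ ⊆ derivIter P ζ := by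
  induction ζ using WellFoundedLT.induction with
  | _ ζ ih =>
  intro t ht
  rw [mem_derivIter_iff] at ht ⊢
  exact ⟨h ht.1, fun ζ' hζ' =>
    let ⟨s, hs, hts⟩ := ht.2 ζ' hζ'
    ⟨s, ih ζ' hζ' hs, hts⟩⟩

theorem treeRank_le (h : derivIter P ζ = ∅) : treeRank P ≤ ζ :=
  csInf_le' h

theorem derivIter_treeRank (h : IsWFTree P) : derivIter P (treeRank P) = ∅ :=
  csInf_mem h

theorem derivIter_nonempty_of_lt_treeRank (h : ζ < treeRank P) : (derivIter P ζ).Nonempty :=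
  nonempty_iff_ne_empty.2 fun he => (treeRank_le he).not_gt h

theorem treeRank_empty : treeRank (∅ : Set α) = 0 :=
  nonpos_iff_eq_zero.1 (treeRank_le derivIter_zero)

theorem IsWFTree.mono (hQ : Q ⊆ P) (h : IsWFTree P) : IsWFTree Q :=
  let ⟨ξ, hξ⟩ := h
  ⟨ξ, subset_empty_iff.1 (hξ ▸ derivIter_mono hQ ξ)⟩

theorem treeRank_mono (hQ : Q ⊆ P) (h : IsWFTree P) : treeRank Q ≤ treeRank P :=
  treeRank_le (subset_empty_iff.1 (derivIter_treeRank h ▸ derivIter_mono hQ _))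

theorem treeRank_lt_of_subset_Ioi (hP : IsWFTree P) (ht : t ∈ P) (hQ : Q ⊆ P ∩ Ioi t) :
    treeRank Q < treeRank P := by
  have hmem : t ∈ derivIter P (treeRank Q) := by
    refine mem_derivIter_iff.2 ⟨ht, fun ζ hζ => ?_⟩
    obtain ⟨s, hs⟩ := derivIter_nonempty_of_lt_treeRank hζ
    exact ⟨s, derivIter_mono (hQ.trans inter_subset_left) ζ hs, (hQ (derivIter_subset ζ hs)).2⟩
  refine lt_of_not_ge fun hle => ?_
  simpa [derivIter_treeRank hP] using derivIter_antitone hle hmem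

theorem le_of_mem_derivIter {g : α → Ordinal.{u}} (hg : StrictAntiOn g P)
    (ht : t ∈ derivIter P ζ) : ζ ≤ g t := by
  induction ζ using WellFoundedLT.induction generalizing t with
  | _ ζ ih =>
  obtain ⟨htP, h⟩ := mem_derivIter_iff.1 ht
  refine le_of_forall_lt fun ζ' hζ' => ?_
  obtain ⟨s, hs, hts⟩ := h ζ' hζ'
  exact (ih ζ' hζ' hs).trans_lt (hg htP (derivIter_subset ζ' hs) hts)

theorem derivIter_eq_empty_of_strictAntiOn {g : α → Ordinal.{u}} (hg : StrictAntiOn g P)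
    (hρ : ∀ t ∈ P, g t < ρ) : derivIter P ρ = ∅ :=
  eq_empty_of_forall_notMem fun t ht =>
    (le_of_mem_derivIter hg ht).not_gt (hρ t (derivIter_subset ρ ht))

theorem derivIter_eq_empty_of_strictAntiOn_of_mem_Ico {g : α → Ordinal.{u}} {a b : Ordinal.{u}}
    (hg : StrictAntiOn g P) (hab : ∀ t ∈ P, g t ∈ Ico a (a + b)) : derivIter P b = ∅ := by
  refine derivIter_eq_empty_of_strictAntiOn (g := fun t => g t - a) (fun s hs t ht hst => ?_)
    fun t ht => (sub_lt_of_le (hab t ht).1).2 (hab t ht).2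
  rw [sub_lt_of_le (hab t ht).1, Ordinal.add_sub_cancel_of_le (hab s hs).1]
  exact hg hs ht hst

theorem mem_derivIter_of_le {g : α → Ordinal.{u}}
    (hg : ∀ s ∈ P, ∀ ζ < g s, ∃ t ∈ P, s < t ∧ ζ ≤ g t) (hs : s ∈ P) (hζ : ζ ≤ g s) :
    s ∈ derivIter P ζ := by
  induction ζ using WellFoundedLT.induction generalizing s with
  | _ ζ ih =>
  refine mem_derivIter_iff.2 ⟨hs, fun ζ' hζ' => ?_⟩
  obtain ⟨t, ht, hst, hζt⟩ := hg s hs ζ' (hζ'.trans_le hζ)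
  exact ⟨t, ih ζ' hζ' ht hζt, hst⟩

theorem treeRank_union_le (h : IsWFTree (Q ∪ R)) :
    treeRank (Q ∪ R) ≤ treeRank Q ♯ treeRank R := by
  have hQ := h.mono subset_union_left
  have hR := h.mono subset_union_right
  let ρ (S : Set α) (t : α) : Ordinal.{u} := treeRank (S ∩ Ioi t)
  have hρ_anti {S} (hS : IsWFTree S) {s t} (hst : t < s) : ρ S s ≤ ρ S t :=
    treeRank_mono (inter_subset_inter_right S (Ioi_subset_Ioi hst.le)) (hS.mono inter_subset_left)
  have hρ_strictAnti {S} (hS : IsWFTree S) {s t} (hs : s ∈ S) (hst : t < s) : ρ S s < ρ S t :=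
    treeRank_lt_of_subset_Ioi (hS.mono inter_subset_left) ⟨hs, hst⟩
      fun x hx => ⟨⟨hx.1, hst.trans hx.2⟩, hx.2⟩
  have hρ_lt {S} (hS : IsWFTree S) {t} (ht : t ∈ S) : ρ S t < treeRank S :=
    treeRank_lt_of_subset_Ioi hS ht subset_rfl
  have hρ_le {S} (hS : IsWFTree S) (t) : ρ S t ≤ treeRank S :=
    treeRank_mono inter_subset_left hS
  refine treeRank_le (derivIter_eq_empty_of_strictAntiOn (g := fun t => ρ Q t ♯ ρ R t) ?_ ?_)
  · rintro t - s (hs | hs) hts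
    · exact nadd_lt_nadd_of_lt_of_le (hρ_strictAnti hQ hs hts) (hρ_anti hR hts)
    · exact nadd_lt_nadd_of_le_of_lt (hρ_anti hQ hts) (hρ_strictAnti hR hs hts)
  · rintro t (ht | ht)
    · exact nadd_lt_nadd_of_lt_of_le (hρ_lt hQ ht) (hρ_le hR t)
    · exact nadd_lt_nadd_of_le_of_lt (hρ_le hQ t) (hρ_lt hR ht)

theorem exists_treeRank_inter_preimage_eq {ι : Type*} [Finite ι] [Nonempty ι] (hP : IsWFTree P)
    (hrank : IsPrincipal (· + ·) (treeRank P))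
    (f : α → ι) : ∃ c, treeRank (P ∩ f ⁻¹' {c}) = treeRank P := by
  by_contra! hlt
  replace hlt c : treeRank (P ∩ f ⁻¹' {c}) < treeRank P :=
    (treeRank_mono inter_subset_left hP).lt_of_ne (hlt c)
  have hunion (s : Set ι) (hs : s.Finite) : treeRank (P ∩ f ⁻¹' s) < treeRank P := by
    induction s, hs using Set.Finite.induction_on with
    | empty =>
      rw [preimage_empty, inter_empty, treeRank_empty]
      exact pos_of_gt (hlt (Classical.arbitrary ι))
    | @insert c s _ _ ih =>
      rw [insert_eq, preimage_union, inter_union_distrib_left]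
      have hWF : IsWFTree (P ∩ f ⁻¹' {c} ∪ P ∩ f ⁻¹' s) :=
        hP.mono (union_subset inter_subset_left inter_subset_left)
      exact (treeRank_union_le hWF).trans_lt (hrank.nadd_lt (hlt c) ih)
  simpa using hunion univ finite_univ

end

/-- A copy of `List β` carrying the suffix order instead of the lexicographic one. -/
structure SuffixList (β : Type u) : Type u where
  toList : List β

namespace SuffixList

variable {β : Type u}

theorem toList_injective : Function.Injective (toList : SuffixList β → List β) :=
  fun ⟨_⟩ ⟨_⟩ h => congrArg mk h

instance : PartialOrder (SuffixList β) where
  le s t := s.toList <:+ t.toList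
  le_refl s := List.suffix_refl s.toList
  le_trans _ _ _ := List.IsSuffix.trans
  le_antisymm _ _ h h' := toList_injective (h.eq_of_length (h.length_le.antisymm h'.length_le))

theorem le_def {s t : SuffixList β} : s ≤ t ↔ s.toList <:+ t.toList := Iff.rfl

theorem lt_cons (x : β) (l : List β) : (⟨l⟩ : SuffixList β) < ⟨x :: l⟩ :=
  lt_of_le_of_ne (List.suffix_cons x l) fun h => by simpa using congrArg (·.toList.length) h

/-- The finite strictly decreasing sequences in `β`, stored with the last (smallest) entry at
the head, so that extending a sequence means adding a smaller element at the head. -/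
def strictChains (β : Type u) [LT β] : Set (SuffixList β) :=
  {s | s.toList ≠ [] ∧ s.toList.IsChain (· < ·)}

theorem isTree_strictChains [LT β] : IsTree (strictChains β) := by
  refine fun t _ => ⟨fun s hs s' hs' _ => List.suffix_or_suffix_of_suffix hs.2 hs'.2, ?_⟩
  refine Finite.wellFoundedOn (((t.toList.tails.finite_toSet).image mk).subset ?_)
  exact fun s hs => ⟨s.toList, (List.mem_tails _ _).2 hs.2, rfl⟩

/-- The ordinal of the head; the junk value `0` on the empty list is never used. -/
noncomputable def headRank {o : Ordinal.{u}} : SuffixList o.ToType → Ordinal.{u}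
  | ⟨[]⟩ => 0
  | ⟨x :: _⟩ => x

variable {ξ : Ordinal.{u}}

theorem headRank_lt {s : SuffixList ξ.ToType} (hs : s ∈ strictChains ξ.ToType) :
    headRank s < ξ := by
  obtain ⟨_ | ⟨x, l⟩⟩ := s
  · exact absurd rfl hs.1
  · exact (ToType.toOrd x).2

theorem strictAntiOn_headRank : StrictAntiOn headRank (strictChains ξ.ToType) := by
  rintro ⟨l⟩ ⟨hl, -⟩ ⟨m⟩ ⟨-, hm⟩ hlt
  obtain ⟨r, rfl⟩ := le_def.1 hlt.le
  obtain _ | ⟨y, r⟩ := r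
  · exact absurd rfl hlt.ne
  obtain _ | ⟨x, l⟩ := l
  · exact absurd rfl hl
  have hyx : y < x := (List.pairwise_append.1 (List.isChain_iff_pairwise.1 hm)).2.2 y
    List.mem_cons_self x List.mem_cons_self
  exact ToType.mk.symm.strictMono hyx

theorem exists_gt_headRank_eq {s : SuffixList ξ.ToType} (hs : s ∈ strictChains ξ.ToType)
    {ζ : Ordinal.{u}} (hζ : ζ < headRank s) :
    ∃ t ∈ strictChains ξ.ToType, s < t ∧ ζ ≤ headRank t := by
  obtain ⟨_ | ⟨y, l⟩⟩ := s
  · exact absurd rfl hs.1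
  let x : ξ.ToType := ToType.mk ⟨ζ, hζ.trans (headRank_lt hs)⟩
  have hx : headRank ⟨x :: y :: l⟩ = ζ := by simp [x, headRank]
  refine ⟨⟨x :: y :: l⟩, ⟨List.cons_ne_nil _ _, List.isChain_cons.2 ⟨?_, hs.2⟩⟩,
    lt_cons x _, hx.ge⟩
  rintro _ ⟨⟩
  apply ToType.mk.symm.lt_iff_lt.1
  rw [OrderIso.symm_apply_apply]
  exact hζ

theorem strictChains_derivIter_eq_empty : derivIter (strictChains ξ.ToType) ξ = ∅ :=
  derivIter_eq_empty_of_strictAntiOn strictAntiOn_headRank fun _ => headRank_lt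

theorem isWFTree_strictChains : IsWFTree (strictChains ξ.ToType) :=
  ⟨ξ, strictChains_derivIter_eq_empty⟩

theorem treeRank_strictChains : treeRank (strictChains ξ.ToType) = ξ := by
  refine (treeRank_le strictChains_derivIter_eq_empty).antisymm (le_of_forall_lt fun ζ hζ => ?_)
  let s : SuffixList ξ.ToType := ⟨[ToType.mk ⟨ζ, hζ⟩]⟩
  have hs : s ∈ strictChains ξ.ToType := ⟨List.cons_ne_nil _ _, List.isChain_singleton _⟩
  refine lt_of_not_ge fun hle => ?_
  have := mem_derivIter_of_le (fun _ => exists_gt_headRank_eq) hs (ζ := treeRank _)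
    (by simpa [s, headRank] using hle)
  rw [derivIter_treeRank isWFTree_strictChains] at this
  exact notMem_empty s this

theorem treeRank_le_of_forall_headRank_lt {Q : Set (SuffixList ξ.ToType)}
    (hQ : Q ⊆ strictChains ξ.ToType) {a : Ordinal.{u}} (ha : ∀ t ∈ Q, headRank t < a) :
    treeRank Q ≤ a :=
  treeRank_le (derivIter_eq_empty_of_strictAntiOn (strictAntiOn_headRank.mono hQ) ha)

theorem treeRank_le_of_forall_le_headRank {Q : Set (SuffixList ξ.ToType)}
    (hQ : Q ⊆ strictChains ξ.ToType) {a b : Ordinal.{u}} (ha : ∀ t ∈ Q, a ≤ headRank t)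
    (hab : ξ ≤ a + b) : treeRank Q ≤ b :=
  treeRank_le (derivIter_eq_empty_of_strictAntiOn_of_mem_Ico (strictAntiOn_headRank.mono hQ)
    fun t ht => ⟨ha t ht, (headRank_lt (hQ ht)).trans_le hab⟩)

theorem exists_headRank_lt_and_le_headRank {a b : Ordinal.{u}} (ha : a < ξ) (hb : b < ξ)
    (hab : ξ ≤ a + b) {Q : Set (SuffixList ξ.ToType)} (hQ : Q ⊆ strictChains ξ.ToType)
    (hrank : treeRank Q = ξ) : ∃ s ∈ Q, ∃ t ∈ Q, headRank s < a ∧ a ≤ headRank t := by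
  by_contra! h
  by_cases hlow : ∃ s ∈ Q, headRank s < a
  · obtain ⟨s, hs, hsa⟩ := hlow
    exact ha.not_ge (hrank ▸ treeRank_le_of_forall_headRank_lt hQ fun t ht => h s hs t ht hsa)
  · push Not at hlow
    exact hb.not_ge (hrank ▸ treeRank_le_of_forall_le_headRank hQ hlow hab)

end SuffixList

theorem statement4_general (ξ : Ordinal.{u}) :
    (¬ ∃ a b : Ordinal.{u}, a < ξ ∧ b < ξ ∧ ξ ≤ a + b) ↔
      ∀ (α : Type u) [PartialOrder α] (P : Set α), IsTree P → IsWFTree P →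
        treeRank P = ξ → ∀ (k : ℕ) (f : α → Fin (k + 1)),
          ∃ Q ⊆ P, treeRank Q = treeRank P ∧
            ∃ c : Fin (k + 1), ∀ t ∈ Q, f t = c := by
  have hprincipal : (¬ ∃ a b : Ordinal.{u}, a < ξ ∧ b < ξ ∧ ξ ≤ a + b) ↔
      IsPrincipal (· + ·) ξ := by
    simp only [not_exists, not_and, not_le]
    exact ⟨fun h a b ha hb => h a b ha hb, fun h a b ha hb => h ha hb⟩
  rw [hprincipal]
  refine ⟨fun hξ α _ P _ hP hrank k f => ?_, fun h => by_contra fun hξ => ?_⟩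
  · obtain ⟨c, hc⟩ := exists_treeRank_inter_preimage_eq hP (hrank ▸ hξ) f
    exact ⟨_, inter_subset_left, hc, c, fun t ht => ht.2⟩
  obtain ⟨a, ha, b, hb, hab⟩ := not_isPrincipal_iff.1 hξ
  obtain ⟨Q, hQ, hQrank, c, hc⟩ := h _ _ SuffixList.isTree_strictChains
    SuffixList.isWFTree_strictChains SuffixList.treeRank_strictChains 1
    fun s => if SuffixList.headRank s < a then 0 else 1
  obtain ⟨s, hs, t, ht, hsa, hat⟩ := SuffixList.exists_headRank_lt_and_le_headRank ha hb hab hQ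
    (hQrank.trans SuffixList.treeRank_strictChains)
  have hst := (hc s hs).trans (hc t ht).symm
  simp [hsa, hat.not_gt] at hst

/-- a nonzero ordinal `ξ` has the Ramsey property for singletons
(every finite coloring of a tree of rank `ξ` is constant on a subtree of full rank)
if and only if `ξ` is additively indecomposable. -/
theorem statement4 (ξ : Ordinal.{u}) (hξ : ξ ≠ 0) :
    (¬ ∃ a b : Ordinal.{u}, a < ξ ∧ b < ξ ∧ ξ ≤ a + b) ↔
      ∀ (α : Type u) [PartialOrder α] (P : Set α), IsTree P → IsWFTree P →
        treeRank P = ξ → ∀ (k : ℕ) (f : α → Fin (k + 1)),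
          ∃ Q ⊆ P, treeRank Q = treeRank P ∧
            ∃ c : Fin (k + 1), ∀ t ∈ Q, f t = c :=
  statement4_general ξ
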